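/- Let u ∈ C_c^∞((-∞,T₁] × S^{n-1}) (smooth, compactly supported in t ≤ T₁). If for all t in the support, |∂_t ln√γ(t,θ)| e^t is bounded by a small constant so that the boundary terms vanish, then c² ∫ u² e^{-t} √γ dt dθ ≤ 4 e^{-T₁} ∫ (∂_t u)² √γ dt dθ, for a constant c depending only on the bound Ce^{T₀} for |∂_t ln√γ|. -/

import Mathlib

open MeasureTheory Real Filter

-- integral of the derivative of a C¹ compactly supported function vanishes
lemma integral_deriv_zero' {F : ℝ → ℝ} (hF : ContDiff ℝ 1 F) (hFc : HasCompactSupport F) :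
    ∫ x, deriv F x = 0 := by
  have hc : Continuous (deriv F) := hF.continuous_deriv le_rfl
  have hint : Integrable (deriv F) := hc.integrable_of_hasCompactSupport hFc.deriv
  rw [← intervalIntegral.integral_Iic_add_Ioi (b := (0:ℝ)) hint.integrableOn hint.integrableOn,
    HasCompactSupport.integral_Iic_deriv_eq hF hFc 0,
    HasCompactSupport.integral_Ioi_deriv_eq hF hFc 0]
  ring

lemma key_lemma (C₀ T₁ : ℝ) (hC₀ : 1 ≤ C₀) (f g : ℝ → ℝ)
    (hf : ContDiff ℝ (⊤ : ℕ∞) f) (hfc : HasCompactSupport f)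
    (hsupp : ∀ t, f t ≠ 0 → T₁ ≤ t)
    (hg : Continuous g) (hgl : ∀ t, C₀⁻¹ ≤ g t) (hgu : ∀ t, g t ≤ C₀) :
    C₀⁻¹ ^ 2 * ∫ t, f t ^ 2 * Real.exp (-t) * Real.sqrt (g t)
      ≤ 4 * Real.exp (-T₁) * ∫ t, (deriv f t) ^ 2 * Real.sqrt (g t) := by
  have hC₀0 : (0:ℝ) < C₀ := lt_of_lt_of_le one_pos hC₀
  have hcf : Continuous f := hf.continuous
  have hcd : Continuous (deriv f) := hf.continuous_deriv (by simp)
  have hce : Continuous (fun t : ℝ => Real.exp (-t)) := Real.continuous_exp.comp continuous_neg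
  have hcs : Continuous (fun t => Real.sqrt (g t)) := Real.continuous_sqrt.comp hg
  -- compact-support helpers
  have csf : ∀ h : ℝ → ℝ, (∀ t, f t = 0 → h t = 0) → HasCompactSupport h := fun h hh =>
    hfc.mono (fun x hx => by
      simp only [Function.mem_support] at hx ⊢
      exact fun h0 => hx (hh x h0))
  have csd : ∀ h : ℝ → ℝ, (∀ t, deriv f t = 0 → h t = 0) → HasCompactSupport h := fun h hh =>
    hfc.deriv.mono (fun x hx => by
      simp only [Function.mem_support] at hx ⊢
      exact fun h0 => hx (hh x h0))
  -- integrability of everything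
  have iI : Integrable (fun t => f t ^ 2 * Real.exp (-t) * Real.sqrt (g t)) :=
    (((hcf.pow 2).mul hce).mul hcs).integrable_of_hasCompactSupport
      (csf _ (fun t h0 => by simp [h0]))
  have iP : Integrable (fun t => f t ^ 2 * Real.exp (-t)) :=
    ((hcf.pow 2).mul hce).integrable_of_hasCompactSupport (csf _ (fun t h0 => by simp [h0]))
  have iR : Integrable (fun t => f t * (2 * deriv f t * Real.exp (-t))) :=
    (hcf.mul ((continuous_const.mul hcd).mul hce)).integrable_of_hasCompactSupport
      (csf _ (fun t h0 => by simp [h0]))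
  have iQ : Integrable (fun t => deriv f t ^ 2 * Real.exp (-t)) :=
    ((hcd.pow 2).mul hce).integrable_of_hasCompactSupport (csd _ (fun t h0 => by simp [h0]))
  have iK : Integrable (fun t => deriv f t ^ 2) :=
    (hcd.pow 2).integrable_of_hasCompactSupport (csd _ (fun t h0 => by simp [h0]))
  have iJ : Integrable (fun t => deriv f t ^ 2 * Real.sqrt (g t)) :=
    ((hcd.pow 2).mul hcs).integrable_of_hasCompactSupport (csd _ (fun t h0 => by simp [h0]))
  -- derivative vanishes below T₁
  have hd0 : ∀ t, t < T₁ → deriv f t = 0 := by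
    intro t ht
    have hev : f =ᶠ[nhds t] (fun _ => 0) := by
      filter_upwards [Iio_mem_nhds ht] with s hs
      by_contra h
      exact absurd (hsupp s h) (not_le.2 hs)
    rw [hev.deriv_eq]
    simp
  -- Integration by parts: P = R
  have hfd : ∀ t, HasDerivAt f (deriv f t) t := fun t =>
    ((hf.differentiable (by simp)) t).hasDerivAt
  have hFd : ∀ t : ℝ, HasDerivAt (fun s => f s ^ 2 * Real.exp (-s))
      (f t * (2 * deriv f t * Real.exp (-t)) - f t ^ 2 * Real.exp (-t)) t := by
    intro t
    have h1 : HasDerivAt (fun s => f s ^ 2) (2 * f t * deriv f t) t := by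
      simpa using (hfd t).fun_pow 2
    have h2 : HasDerivAt (fun s : ℝ => Real.exp (-s)) (-Real.exp (-t)) t := by
      simpa using (hasDerivAt_neg t).exp
    have := h1.fun_mul h2
    refine this.congr_deriv ?_
    ring
  have hF1 : ContDiff ℝ 1 (fun s => f s ^ 2 * Real.exp (-s)) :=
    ((hf.of_le (by simp)).pow 2).mul (Real.contDiff_exp.comp contDiff_id.neg)
  have hFc : HasCompactSupport (fun s => f s ^ 2 * Real.exp (-s)) :=
    csf _ (fun t h0 => by simp [h0])
  have hibp : ∫ t, (f t * (2 * deriv f t * Real.exp (-t)) - f t ^ 2 * Real.exp (-t)) = 0 := by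
    have h0 := integral_deriv_zero' hF1 hFc
    have : deriv (fun s => f s ^ 2 * Real.exp (-s)) =
        fun t => f t * (2 * deriv f t * Real.exp (-t)) - f t ^ 2 * Real.exp (-t) :=
      funext fun t => (hFd t).deriv
    rwa [this] at h0
  have hPR : (∫ t, f t ^ 2 * Real.exp (-t)) = ∫ t, f t * (2 * deriv f t * Real.exp (-t)) := by
    have := integral_sub iR iP
    rw [hibp] at this
    linarith [this]
  -- R ≤ P/2 + 2Q
  have hR : (∫ t, f t * (2 * deriv f t * Real.exp (-t)))
      ≤ ∫ t, ((1:ℝ)/2 * (f t ^ 2 * Real.exp (-t)) + 2 * (deriv f t ^ 2 * Real.exp (-t))) := by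
    apply integral_mono iR ((iP.const_mul _).add (iQ.const_mul _))
    intro t
    have he : (0:ℝ) < Real.exp (-t) := Real.exp_pos _
    simp only [Pi.add_apply]
    nlinarith [mul_nonneg (sq_nonneg (f t - 2 * deriv f t)) he.le]
  have hPQ : (∫ t, f t ^ 2 * Real.exp (-t)) ≤ 4 * ∫ t, deriv f t ^ 2 * Real.exp (-t) := by
    rw [integral_add (iP.const_mul _) (iQ.const_mul _), integral_const_mul, integral_const_mul] at hR
    rw [hPR]
    linarith [hR]
  -- Q ≤ e^{-T₁} K
  have hQK : (∫ t, deriv f t ^ 2 * Real.exp (-t))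
      ≤ Real.exp (-T₁) * ∫ t, deriv f t ^ 2 := by
    rw [← integral_const_mul]
    apply integral_mono iQ (iK.const_mul _)
    intro t
    simp only
    by_cases ht : t < T₁
    · simp [hd0 t ht]
    · have : Real.exp (-t) ≤ Real.exp (-T₁) :=
        Real.exp_le_exp.2 (neg_le_neg (not_lt.1 ht))
      nlinarith [sq_nonneg (deriv f t)]
  -- K ≤ √C₀ J
  have hKJ : (∫ t, deriv f t ^ 2) ≤ Real.sqrt C₀ * ∫ t, deriv f t ^ 2 * Real.sqrt (g t) := by
    rw [← integral_const_mul]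
    apply integral_mono iK (iJ.const_mul _)
    intro t
    simp only
    have h1 : (1:ℝ) ≤ Real.sqrt C₀ * Real.sqrt (g t) := by
      have := Real.sqrt_le_sqrt (hgl t)
      have h2 : Real.sqrt C₀ * Real.sqrt C₀⁻¹ = 1 := by
        rw [← Real.sqrt_mul hC₀0.le, mul_inv_cancel₀ (ne_of_gt hC₀0), Real.sqrt_one]
      nlinarith [Real.sqrt_nonneg C₀, Real.sqrt_nonneg (g t)]
    nlinarith [sq_nonneg (deriv f t)]
  -- I ≤ √C₀ P
  have hIP : (∫ t, f t ^ 2 * Real.exp (-t) * Real.sqrt (g t))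
      ≤ Real.sqrt C₀ * ∫ t, f t ^ 2 * Real.exp (-t) := by
    rw [← integral_const_mul]
    apply integral_mono iI (iP.const_mul _)
    intro t
    simp only
    have := Real.sqrt_le_sqrt (hgu t)
    have hfe : (0:ℝ) ≤ f t ^ 2 * Real.exp (-t) :=
      mul_nonneg (sq_nonneg _) (Real.exp_pos _).le
    nlinarith
  -- combine
  have hJpos : 0 ≤ ∫ t, deriv f t ^ 2 * Real.sqrt (g t) :=
    integral_nonneg fun t => mul_nonneg (sq_nonneg _) (Real.sqrt_nonneg _)
  have hIpos : 0 ≤ ∫ t, f t ^ 2 * Real.exp (-t) * Real.sqrt (g t) :=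
    integral_nonneg fun t =>
      mul_nonneg (mul_nonneg (sq_nonneg _) (Real.exp_pos _).le) (Real.sqrt_nonneg _)
  have hsq : Real.sqrt C₀ * Real.sqrt C₀ = C₀ := Real.mul_self_sqrt hC₀0.le
  have hs1 : (1:ℝ) ≤ Real.sqrt C₀ := by
    nlinarith [Real.sqrt_nonneg C₀]
  have hinv : C₀⁻¹ ≤ 1 := by
    rw [inv_le_one_iff₀]; right; exact hC₀
  have hinv0 : 0 < C₀⁻¹ := inv_pos.2 hC₀0
  have hexp : 0 < Real.exp (-T₁) := Real.exp_pos _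
  have hchain : (∫ t, f t ^ 2 * Real.exp (-t) * Real.sqrt (g t))
      ≤ Real.sqrt C₀ * (4 * (Real.exp (-T₁) * (Real.sqrt C₀ * ∫ t, deriv f t ^ 2 * Real.sqrt (g t)))) := by
    calc (∫ t, f t ^ 2 * Real.exp (-t) * Real.sqrt (g t))
        ≤ Real.sqrt C₀ * ∫ t, f t ^ 2 * Real.exp (-t) := hIP
      _ ≤ Real.sqrt C₀ * (4 * ∫ t, deriv f t ^ 2 * Real.exp (-t)) :=
          mul_le_mul_of_nonneg_left hPQ (Real.sqrt_nonneg _)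
      _ ≤ Real.sqrt C₀ * (4 * (Real.exp (-T₁) * ∫ t, deriv f t ^ 2)) := by
          apply mul_le_mul_of_nonneg_left _ (Real.sqrt_nonneg _)
          exact mul_le_mul_of_nonneg_left hQK (by norm_num)
      _ ≤ Real.sqrt C₀ * (4 * (Real.exp (-T₁) * (Real.sqrt C₀ * ∫ t, deriv f t ^ 2 * Real.sqrt (g t)))) := by
          apply mul_le_mul_of_nonneg_left _ (Real.sqrt_nonneg _)
          apply mul_le_mul_of_nonneg_left _ (by norm_num : (0:ℝ) ≤ 4)
          exact mul_le_mul_of_nonneg_left hKJ hexp.le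
  have hCC : C₀⁻¹ * C₀ = 1 := inv_mul_cancel₀ (ne_of_gt hC₀0)
  have hfin := mul_le_mul_of_nonneg_left hchain (by positivity : (0:ℝ) ≤ C₀⁻¹ ^ 2)
  have hrw : C₀⁻¹ ^ 2 * (Real.sqrt C₀ * (4 * (Real.exp (-T₁) *
      (Real.sqrt C₀ * ∫ t, deriv f t ^ 2 * Real.sqrt (g t)))))
      = C₀⁻¹ * (4 * (Real.exp (-T₁) * ∫ t, deriv f t ^ 2 * Real.sqrt (g t))) := by
    calc C₀⁻¹ ^ 2 * (Real.sqrt C₀ * (4 * (Real.exp (-T₁) *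
        (Real.sqrt C₀ * ∫ t, deriv f t ^ 2 * Real.sqrt (g t)))))
        = (Real.sqrt C₀ * Real.sqrt C₀) * (C₀⁻¹ ^ 2 *
            (4 * (Real.exp (-T₁) * ∫ t, deriv f t ^ 2 * Real.sqrt (g t)))) := by ring
      _ = (C₀⁻¹ * C₀) * (C₀⁻¹ *
            (4 * (Real.exp (-T₁) * ∫ t, deriv f t ^ 2 * Real.sqrt (g t)))) := by rw [hsq]; ring
      _ = C₀⁻¹ * (4 * (Real.exp (-T₁) * ∫ t, deriv f t ^ 2 * Real.sqrt (g t))) := by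
            rw [hCC]; ring
  rw [hrw] at hfin
  have := mul_le_mul_of_nonneg_right hinv (mul_nonneg hexp.le hJpos)
  nlinarith [this]

/-- Poincaré-type inequality in the radial variable: if `γ` is a smooth positive
density on `(-∞,T₀) × Θ` with `C₀⁻¹ ≤ γ ≤ C₀` and `|∂_t γ| ≤ C₀ e^t`, and `u` is
smooth, compactly supported in `t` with support in `{t ≥ T₁}`, `T₁ < T₀ < 0`, and
the smallness condition `C₀ e^{T₀} ≤ 1/2` holds (so boundary terms vanish), then
`c² ∬ u² e^{-t} √γ ≤ 4 e^{-T₁} ∬ (∂_t u)² √γ`, `c` depending only on `C₀`. -/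
theorem stmt5 (C₀ : ℝ) (hC₀ : 1 ≤ C₀) :
    ∃ c : ℝ, 0 < c ∧
      ∀ (Θ : Type) (_ : MeasurableSpace Θ) (μ : Measure Θ) (_ : IsFiniteMeasure μ)
        (T₀ T₁ : ℝ) (γ u : ℝ → Θ → ℝ),
        T₀ < 0 → T₁ < T₀ → C₀ * Real.exp T₀ ≤ 1 / 2 →
        (∀ θ, ContDiff ℝ (⊤ : ℕ∞) (fun t => γ t θ)) →
        (∀ θ, ContDiff ℝ (⊤ : ℕ∞) (fun t => u t θ)) →
        (∀ θ, HasCompactSupport (fun t => u t θ)) →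
        (∀ θ t, u t θ ≠ 0 → T₁ ≤ t) →
        (∀ θ t, C₀⁻¹ ≤ γ t θ ∧ γ t θ ≤ C₀) →
        (∀ θ t, |deriv (fun s => γ s θ) t| ≤ C₀ * Real.exp t) →
        Integrable (fun p : ℝ × Θ =>
          (u p.1 p.2) ^ 2 * Real.exp (-p.1) * Real.sqrt (γ p.1 p.2))
          (volume.prod μ) →
        Integrable (fun p : ℝ × Θ =>
          (deriv (fun s => u s p.2) p.1) ^ 2 * Real.sqrt (γ p.1 p.2))
          (volume.prod μ) →
        c ^ 2 * ∫ p : ℝ × Θ,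
            (u p.1 p.2) ^ 2 * Real.exp (-p.1) * Real.sqrt (γ p.1 p.2)
              ∂(volume.prod μ)
          ≤ 4 * Real.exp (-T₁) * ∫ p : ℝ × Θ,
            (deriv (fun s => u s p.2) p.1) ^ 2 * Real.sqrt (γ p.1 p.2)
              ∂(volume.prod μ) := by
  have hC₀0 : (0:ℝ) < C₀ := lt_of_lt_of_le one_pos hC₀
  refine ⟨C₀⁻¹, inv_pos.2 hC₀0, ?_⟩
  intro Θ _ μ _ T₀ T₁ γ u _ _ _ hγ hu huc husupp hγb _ hint1 hint2
  rw [integral_prod_symm _ hint1, integral_prod_symm _ hint2]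
  have h1 : Integrable (fun θ => ∫ t, u t θ ^ 2 * Real.exp (-t) * Real.sqrt (γ t θ)) μ :=
    hint1.integral_prod_right
  have h2 : Integrable (fun θ => ∫ t, (deriv (fun s => u s θ) t) ^ 2 * Real.sqrt (γ t θ)) μ :=
    hint2.integral_prod_right
  rw [← integral_const_mul, ← integral_const_mul]
  apply integral_mono (h1.const_mul _) (h2.const_mul _)
  intro θ
  simp only
  have := key_lemma C₀ T₁ hC₀ (fun t => u t θ) (fun t => γ t θ) (hu θ) (huc θ)
    (fun t h => husupp θ t h) (hγ θ).continuous (fun t => (hγb θ t).1) (fun t => (hγb θ t).2)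
  exact this
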